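/- arXiv:1212.3803 — 2 statements merged into one kernel-verified Lean document; each statement's English description precedes it below -/
import Mathlib

section
/- Let k ≤ ℓ ≤ m be positive integers satisfying 1/k + 1/ℓ + 1/m < 1 and (1 − 1/k − 1/ℓ)·m² − 3m + 4 ≤ 0. Then k ∈ {2, 3, 4}; moreover if k = 2 then ℓ ≤ 6, if k = 3 then ℓ ≤ 5, and if k = 4 then ℓ = m = 4. -/
set_option maxHeartbeats 1600000 in
/-- Finiteness of the possible pairs (k, ℓ). -/
theorem belyi_k_ell_finite (k ℓ m : ℕ) (hk : 0 < k) (hkl : k ≤ ℓ) (hlm : ℓ ≤ m)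
    (hhyp : (1 : ℝ) / k + 1 / ℓ + 1 / m < 1)
    (hquad : (1 - 1 / (k : ℝ) - 1 / ℓ) * (m : ℝ) ^ 2 - 3 * m + 4 ≤ 0) :
    (k = 2 ∨ k = 3 ∨ k = 4) ∧ (k = 2 → ℓ ≤ 6) ∧ (k = 3 → ℓ ≤ 5) ∧
      (k = 4 → ℓ = 4 ∧ m = 4) := by
  have hl : 0 < ℓ := hk.trans_le hkl
  have hm : 0 < m := hl.trans_le hlm
  have hK0 : (0:ℝ) < k := by exact_mod_cast hk
  have hL0 : (0:ℝ) < ℓ := by exact_mod_cast hl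
  have hM0 : (0:ℝ) < m := by exact_mod_cast hm
  have hKL : (k:ℝ) ≤ ℓ := by exact_mod_cast hkl
  have hLM : (ℓ:ℝ) ≤ m := by exact_mod_cast hlm
  have hkne : (k:ℝ) ≠ 0 := ne_of_gt hK0
  have hlne : (ℓ:ℝ) ≠ 0 := ne_of_gt hL0
  have hmne : (m:ℝ) ≠ 0 := ne_of_gt hM0
  -- cleared hyperbolic inequality
  have e1 : ((k:ℝ)*ℓ*m) * (1/k + 1/ℓ + 1/m) = ℓ*m + k*m + k*ℓ := by
    field_simp
  have h1 : (ℓ:ℝ)*m + (k:ℝ)*m + (k:ℝ)*ℓ < (k:ℝ)*ℓ*m := by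
    have := mul_lt_mul_of_pos_left hhyp (by positivity : (0:ℝ) < (k:ℝ)*ℓ*m)
    rw [e1, mul_one] at this
    exact this
  -- cleared quadratic inequality
  have e2 : ((k:ℝ)*ℓ) * ((1 - 1/(k:ℝ) - 1/ℓ) * (m:ℝ)^2 - 3*m + 4)
      = ((k:ℝ)*ℓ - ℓ - k)*(m:ℝ)^2 - (3*m - 4)*((k:ℝ)*ℓ) := by
    field_simp; ring
  have h2 : ((k:ℝ)*ℓ - ℓ - k)*(m:ℝ)^2 ≤ (3*(m:ℝ) - 4)*((k:ℝ)*ℓ) := by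
    have := mul_nonpos_of_nonneg_of_nonpos (le_of_lt (by positivity : (0:ℝ) < (k:ℝ)*ℓ)) hquad
    rw [e2] at this; linarith
  -- k ≥ 2
  have hk2 : 2 ≤ k := by
    by_contra h
    interval_cases k
    simp at *
    nlinarith
  have hK2 : (2:ℝ) ≤ k := by exact_mod_cast hk2
  -- m ≥ 4
  have hm4 : 4 ≤ m := by
    have : (3:ℝ) < m := by nlinarith [mul_pos hK0 hL0, mul_le_mul_of_nonneg_left hLM (le_of_lt hK0), mul_le_mul_of_nonneg_right (hKL.trans hLM) (le_of_lt hL0)]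
    by_contra h
    push_neg at h
    have : (m:ℝ) ≤ 3 := by exact_mod_cast Nat.lt_succ_iff.mp h
    linarith
  have hM4 : (4:ℝ) ≤ m := by exact_mod_cast hm4
  -- k ≤ 4
  have hk4 : k ≤ 4 := by
    by_contra h
    push_neg at h
    have hK5 : (5:ℝ) ≤ k := by exact_mod_cast h
    have hL5 : (5:ℝ) ≤ ℓ := le_trans hK5 hKL
    have hM5 : (5:ℝ) ≤ m := le_trans hL5 hLM
    nlinarith [mul_nonneg (sub_nonneg.2 hK5) (mul_nonneg hL0.le (sq_nonneg (m:ℝ))),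
      mul_nonneg (sub_nonneg.2 hL5) (sq_nonneg (m:ℝ)),
      mul_pos hK0 hL0, mul_nonneg (mul_nonneg hK0.le hL0.le) (sub_nonneg.2 hM5),
      sq_nonneg ((m:ℝ) - 5)]
  -- case analysis
  refine ⟨by omega, ?_, ?_, ?_⟩
  · intro hke
    by_contra h
    push_neg at h
    have hL7 : (7:ℝ) ≤ ℓ := by exact_mod_cast h
    have hM7 : (7:ℝ) ≤ m := le_trans hL7 hLM
    have hKe : (k:ℝ) = 2 := by exact_mod_cast hke
    rw [hKe] at h2
    have q1 : (0:ℝ) ≤ ((ℓ:ℝ) - 7) * (((m:ℝ) - 2) * ((m:ℝ) - 4)) :=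
      mul_nonneg (by linarith) (mul_nonneg (by linarith) (by linarith))
    have q2 := sq_nonneg ((m:ℝ) - 7)
    linarith [q1, q2, h2]
  · intro hke
    by_contra h
    push_neg at h
    have hL6 : (6:ℝ) ≤ ℓ := by exact_mod_cast h
    have hM6 : (6:ℝ) ≤ m := le_trans hL6 hLM
    have hKe : (k:ℝ) = 3 := by exact_mod_cast hke
    rw [hKe] at h2
    have q2 := sq_nonneg ((m:ℝ) - 6)
    have q0 : (0:ℝ) ≤ 2*(m:ℝ)^2 - 9*m + 12 := by linarith [q2, hM6]
    have q1 : (0:ℝ) ≤ ((ℓ:ℝ) - 6) * (2*(m:ℝ)^2 - 9*m + 12) :=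
      mul_nonneg (by linarith) q0
    linarith [q1, q2, h2]
  · intro hke
    have hKe : (k:ℝ) = 4 := by exact_mod_cast hke
    have hL4 : (4:ℝ) ≤ ℓ := by rw [← hKe]; exact hKL
    rw [hKe] at h2
    have hMle : (m:ℝ) ≤ 4 := by
      have q0 : (0:ℝ) ≤ 3*(m:ℝ)^2 - 12*m + 16 := by linarith [sq_nonneg ((m:ℝ) - 2)]
      have q1 : (0:ℝ) ≤ ((ℓ:ℝ) - 4) * (3*(m:ℝ)^2 - 12*m + 16) :=
        mul_nonneg (by linarith) q0
      have key : 8 * (((m:ℝ) - 2) * ((m:ℝ) - 4)) ≤ 0 := by linarith [q1, h2]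
      by_contra hcon
      push_neg at hcon
      have pos : (0:ℝ) < ((m:ℝ) - 2) * ((m:ℝ) - 4) :=
        mul_pos (by linarith) (by linarith)
      linarith [key, pos]
    have hm' : m ≤ 4 := by exact_mod_cast hMle
    have hme : m = 4 := le_antisymm hm' hm4
    refine ⟨?_, hme⟩
    omega
end

section
/- There exist a nonzero rational number c and a monic polynomial W ∈ ℚ[x] of degree 6 such that 64·x²·(x − 3)⁹·(x − 9) − 27·(x − 1)·(8x³ − 72x² − 27x + 27)³ = c·W(x)² as polynomials in ℚ[x]. -/
open Polynomial in
/-- The numerator of φ(x) − 1 for the Belyi map of Example B7 is a constant times a square. -/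
theorem exampleB7_numerator_is_square :
    ∃ (c : ℚ) (W : ℚ[X]), c ≠ 0 ∧ W.Monic ∧ W.natDegree = 6 ∧
      64 * X ^ 2 * (X - 3) ^ 9 * (X - 9)
          - 27 * (X - 1) * (8 * X ^ 3 - 72 * X ^ 2 - 27 * X + 27) ^ 3
        = C c * W ^ 2 := by
  set V : ℚ[X] := 8*X^6 - 144*X^5 + 108*X^4 + 5400*X^3 - 5589*X^2 + 1458*X - 729 with hVdef
  have hdeg : V.natDegree = 6 := by rw [hVdef]; compute_degree!
  refine ⟨64, C (8⁻¹ : ℚ) * V, by norm_num, ?_, ?_, ?_⟩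
  · have hV : V.leadingCoeff = 8 := by
      rw [leadingCoeff, hdeg, hVdef]
      simp [coeff_X_pow, coeff_X]
    rw [Monic, leadingCoeff_mul, leadingCoeff_C, hV]
    norm_num
  · rw [natDegree_C_mul (by norm_num), hdeg]
  · rw [mul_pow, ← C_pow, ← mul_assoc, ← C_mul]
    norm_num
    rw [hVdef]
    ring
end
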